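/- arXiv:1910.12904 — 6 statements merged into one kernel-verified Lean document; each statement's English description precedes it below -/
import Mathlib

section
/- Let H ∈ ℝ^{2n×2n} be skew-Hamiltonian and x ∈ ℝ^{2n}. Then for every j ∈ ℕ the Krylov subspace K_j(H,x) = span{x, Hx, H²x, …, H^{j-1}x} is isotropic; equivalently, (H^i x)ᵀ J (H^k x) = 0 for all i, k ≥ 0. -/
open Matrix

noncomputable section

/-- The canonical skew-symmetric matrix `J = [[0, I],[-I, 0]]`. -/
def Jmat (n : ℕ) : Matrix (Fin n ⊕ Fin n) (Fin n ⊕ Fin n) ℝ :=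
  Matrix.fromBlocks 0 1 (-1) 0

/-- A matrix `H` is skew-Hamiltonian if `Jᵀ Hᵀ J = H`. -/
def IsSkewHamiltonian {n : ℕ} (H : Matrix (Fin n ⊕ Fin n) (Fin n ⊕ Fin n) ℝ) : Prop :=
  (Jmat n)ᵀ * Hᵀ * Jmat n = H

lemma Jmat_transpose (n : ℕ) : (Jmat n)ᵀ = -(Jmat n) := by
  simp [Jmat, Matrix.fromBlocks_transpose, Matrix.fromBlocks_neg]

lemma Jmat_sq (n : ℕ) : Jmat n * Jmat n = -1 := by
  simp [Jmat, Matrix.fromBlocks_multiply, ← Matrix.fromBlocks_one, Matrix.fromBlocks_neg]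

lemma comm_lemma {n : ℕ} {H : Matrix (Fin n ⊕ Fin n) (Fin n ⊕ Fin n) ℝ}
    (hH : IsSkewHamiltonian H) : Hᵀ * Jmat n = Jmat n * H := by
  have h := hH
  unfold IsSkewHamiltonian at h
  rw [Jmat_transpose] at h
  have h2 := congrArg (fun M => Jmat n * M) h
  simp only [← Matrix.mul_assoc, Matrix.mul_neg, Matrix.neg_mul, Jmat_sq] at h2
  simp only [Matrix.neg_mul, Matrix.one_mul, neg_neg] at h2
  exact h2

lemma comm_pow {n : ℕ} {H : Matrix (Fin n ⊕ Fin n) (Fin n ⊕ Fin n) ℝ}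
    (hH : IsSkewHamiltonian H) (m : ℕ) : (Hᵀ)^m * Jmat n = Jmat n * H^m := by
  induction m with
  | zero => simp
  | succ k ih =>
    rw [pow_succ, Matrix.mul_assoc, comm_lemma hH, ← Matrix.mul_assoc, ih,
      Matrix.mul_assoc, ← pow_succ]

lemma key {n : ℕ} {H : Matrix (Fin n ⊕ Fin n) (Fin n ⊕ Fin n) ℝ}
    (hH : IsSkewHamiltonian H) (x : (Fin n ⊕ Fin n) → ℝ) (m : ℕ) :
    x ⬝ᵥ ((Jmat n * H^m) *ᵥ x) = 0 := by
  set A := Jmat n * H^m with hA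
  have hskew : Aᵀ = -A := by
    rw [hA, Matrix.transpose_mul, Matrix.transpose_pow, Jmat_transpose,
      Matrix.mul_neg, comm_pow hH]
  have h1 : x ⬝ᵥ (A *ᵥ x) = -(x ⬝ᵥ (A *ᵥ x)) := by
    conv_lhs => rw [Matrix.dotProduct_mulVec, ← Matrix.mulVec_transpose, hskew,
      Matrix.neg_mulVec, neg_dotProduct, dotProduct_comm]
  linarith

/-- Krylov subspaces of a skew-Hamiltonian matrix are isotropic:
`(H^i x)ᵀ J (H^k x) = 0` for all `i, k ≥ 0`. -/
theorem krylov_isotropic_of_skewHamiltonian {n : ℕ}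
    (H : Matrix (Fin n ⊕ Fin n) (Fin n ⊕ Fin n) ℝ) (hH : IsSkewHamiltonian H)
    (x : (Fin n ⊕ Fin n) → ℝ) :
    ∀ i k : ℕ, ((H ^ i) *ᵥ x) ⬝ᵥ (Jmat n *ᵥ ((H ^ k) *ᵥ x)) = 0 := by
  intro i k
  have : ((H ^ i) *ᵥ x) ⬝ᵥ (Jmat n *ᵥ ((H ^ k) *ᵥ x))
      = x ⬝ᵥ ((Jmat n * H ^ (i + k)) *ᵥ x) := by
    rw [← Matrix.vecMul_transpose, ← Matrix.dotProduct_mulVec,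
      Matrix.mulVec_mulVec, Matrix.mulVec_mulVec, Matrix.transpose_pow,
      comm_pow hH, Matrix.mul_assoc, ← pow_add]
  rw [this]
  exact key hH x (i + k)
end
end

section
/- Let x_1, …, x_n ∈ ℝ^{2n} be linearly independent vectors spanning a Lagrangian subspace, i.e. x_iᵀ J x_j = 0 for all i, j. Then the matrix Ĥ := X_R X_L⁺ + Jᵀ (X_R X_L⁺)ᵀ J is skew-Hamiltonian and satisfies Ĥ x_k = x_{k+1} for all k = 1, …, n-1. -/
open Matrix

noncomputable section

/-- `X_L = [x_1 ⋯ x_{n-1}]`. -/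
def XL {n : ℕ} (x : Fin n → (Fin n ⊕ Fin n) → ℝ) :
    Matrix (Fin n ⊕ Fin n) (Fin (n - 1)) ℝ :=
  Matrix.of fun i j => x ⟨j.1, lt_of_lt_of_le j.2 (Nat.sub_le n 1)⟩ i

/-- `X_R = [x_2 ⋯ x_n]`. -/
def XR {n : ℕ} (x : Fin n → (Fin n ⊕ Fin n) → ℝ) :
    Matrix (Fin n ⊕ Fin n) (Fin (n - 1)) ℝ :=
  Matrix.of fun i j => x ⟨j.1 + 1, by have := j.2; omega⟩ i

/-- The Moore–Penrose pseudoinverse `X_L⁺ = (X_Lᵀ X_L)⁻¹ X_Lᵀ` of `X_L`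
(for `X_L` with linearly independent columns). -/
def XLpinv {n : ℕ} (x : Fin n → (Fin n ⊕ Fin n) → ℝ) :
    Matrix (Fin (n - 1)) (Fin n ⊕ Fin n) ℝ :=
  ((XL x)ᵀ * XL x)⁻¹ * (XL x)ᵀ

/-- `Ĥ = X_R X_L⁺ + Jᵀ (X_R X_L⁺)ᵀ J`. -/
def Hhat {n : ℕ} (x : Fin n → (Fin n ⊕ Fin n) → ℝ) :
    Matrix (Fin n ⊕ Fin n) (Fin n ⊕ Fin n) ℝ :=
  XR x * XLpinv x + (Jmat n)ᵀ * (XR x * XLpinv x)ᵀ * Jmat n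

/-- `H` realizes the Krylov relations `H x_k = x_{k+1}`, `k = 1, …, n-1`. -/
def KrylovRel {n : ℕ} (H : Matrix (Fin n ⊕ Fin n) (Fin n ⊕ Fin n) ℝ)
    (x : Fin n → (Fin n ⊕ Fin n) → ℝ) : Prop :=
  ∀ k : Fin (n - 1), H *ᵥ x ⟨k.1, lt_of_lt_of_le k.2 (Nat.sub_le n 1)⟩
    = x ⟨k.1 + 1, by have := k.2; omega⟩

/-- For any ordered basis of a Lagrangian subspace, `Ĥ = X_R X_L⁺ + Jᵀ (X_R X_L⁺)ᵀ J`
is skew-Hamiltonian and satisfies `Ĥ x_k = x_{k+1}` for `k = 1, …, n-1`. -/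

theorem Hhat_skewHamiltonian_and_krylov {n : ℕ} (x : Fin n → (Fin n ⊕ Fin n) → ℝ)
    (hLI : LinearIndependent ℝ x)
    (hLag : ∀ i j : Fin n, x i ⬝ᵥ (Jmat n *ᵥ x j) = 0) :
    IsSkewHamiltonian (Hhat x) ∧ KrylovRel (Hhat x) x := by
  classical
  have hT : (Jmat n)ᵀ = -Jmat n := by
    ext i j
    rcases i with i | i <;> rcases j with j | j <;>
      simp [Jmat, Matrix.fromBlocks, Matrix.transpose_apply, Matrix.one_apply, eq_comm]
  have hJ2 : Jmat n * Jmat n = -1 := by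
    have h1 : (-1 : Matrix (Fin n ⊕ Fin n) (Fin n ⊕ Fin n) ℝ) =
        Matrix.fromBlocks (-1) 0 0 (-1) := by
      ext i j
      rcases i with i | i <;> rcases j with j | j <;>
        simp [Matrix.fromBlocks, Matrix.one_apply]
    rw [Jmat, Matrix.fromBlocks_multiply, h1]
    congr 1 <;> simp
  have hJ2' : ∀ A : Matrix (Fin n ⊕ Fin n) (Fin n ⊕ Fin n) ℝ,
      Jmat n * (Jmat n * A) = -A := by
    intro A; rw [← Matrix.mul_assoc, hJ2, Matrix.neg_mul, Matrix.one_mul]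
  constructor
  · unfold IsSkewHamiltonian Hhat
    simp only [transpose_add, transpose_mul, transpose_transpose, transpose_neg, hT, Matrix.neg_mul,
      Matrix.mul_neg, neg_neg, Matrix.mul_add, Matrix.add_mul, Matrix.mul_assoc, hJ2, hJ2',
      Matrix.mul_one, Matrix.one_mul]
    abel
  · -- Krylov relations
    -- invertibility of the Gram matrix
    have hXLker : ∀ v : Fin (n-1) → ℝ, XL x *ᵥ v = 0 → v = 0 := by
      intro v hv
      have hLI' : LinearIndependent ℝ (fun j : Fin (n-1) =>
          x ⟨j.1, lt_of_lt_of_le j.2 (Nat.sub_le n 1)⟩) := by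
        apply hLI.comp
        intro a b hab
        simpa [Fin.ext_iff] using congrArg Fin.val hab
      have := Fintype.linearIndependent_iff.mp hLI' v ?_
      · funext j; exact this j
      · funext i
        have := congrFun hv i
        simpa [Matrix.mulVec, dotProduct, XL, mul_comm, Finset.sum_apply] using this
    have hGker : ∀ v : Fin (n-1) → ℝ, ((XL x)ᵀ * XL x) *ᵥ v = 0 → v = 0 := by
      intro v hv
      apply hXLker
      have h0 : v ⬝ᵥ (((XL x)ᵀ * XL x) *ᵥ v) = 0 := by rw [hv]; simp
      rw [← Matrix.mulVec_mulVec, Matrix.dotProduct_mulVec, Matrix.vecMul_transpose] at h0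
      exact dotProduct_self_eq_zero.mp h0
    have hdet : IsUnit ((XL x)ᵀ * XL x).det := by
      rw [isUnit_iff_ne_zero]
      intro h0
      obtain ⟨v, hv0, hv⟩ := (Matrix.exists_mulVec_eq_zero_iff).mpr h0
      exact hv0 (hGker v hv)
    have hpinv : XLpinv x * XL x = 1 := by
      rw [XLpinv, Matrix.mul_assoc, Matrix.nonsing_inv_mul _ hdet]
    intro k
    -- x_k as a column of XL
    have hcol : ∀ k : Fin (n-1), XL x *ᵥ Pi.single k 1
        = x ⟨k.1, lt_of_lt_of_le k.2 (Nat.sub_le n 1)⟩ := by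
      intro k; funext i
      simp [Matrix.mulVec, dotProduct, Pi.single_apply, XL]
    have hcolR : XR x *ᵥ Pi.single k 1 = x ⟨k.1 + 1, by have := k.2; omega⟩ := by
      funext i
      simp [Matrix.mulVec, dotProduct, Pi.single_apply, XR]
    -- second term vanishes
    have hzero : (XR x)ᵀ *ᵥ (Jmat n *ᵥ x ⟨k.1, lt_of_lt_of_le k.2 (Nat.sub_le n 1)⟩) = 0 := by
      funext j
      have := hLag ⟨j.1 + 1, by have := j.2; omega⟩ ⟨k.1, lt_of_lt_of_le k.2 (Nat.sub_le n 1)⟩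
      simpa [Matrix.mulVec, dotProduct, XR] using this
    rw [Hhat, Matrix.add_mulVec]
    have h1 : (XR x * XLpinv x) *ᵥ x ⟨k.1, lt_of_lt_of_le k.2 (Nat.sub_le n 1)⟩
        = x ⟨k.1 + 1, by have := k.2; omega⟩ := by
      rw [← hcol k, Matrix.mulVec_mulVec, Matrix.mul_assoc, hpinv, Matrix.mul_one, hcolR]
    have h2 : ((Jmat n)ᵀ * (XR x * XLpinv x)ᵀ * Jmat n) *ᵥ
        x ⟨k.1, lt_of_lt_of_le k.2 (Nat.sub_le n 1)⟩ = 0 := by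
      rw [transpose_mul, ← Matrix.mulVec_mulVec, ← Matrix.mulVec_mulVec,
        ← Matrix.mulVec_mulVec, hzero]
      simp
    rw [h1, h2, add_zero]
end
end

section
/- Let x_1, …, x_n ∈ ℝ^{2n} be linearly independent vectors spanning a Lagrangian subspace, i.e. x_iᵀ J x_j = 0 for all i, j. Then for K := X_R X_L⁺ one has K K^⋆ = 0 and K^⋆ K = 0, where K^⋆ := Jᵀ Kᵀ J. -/
/-! With `G = X_Lᵀ X_L`, `K = X_R G⁻¹ X_Lᵀ`, so `K K^⋆` contains the factor `X_Lᵀ Jᵀ X_L` and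
`K^⋆ K` the factor `X_Rᵀ J X_R`. Both vanish because the columns of `X_L` and `X_R` are among
the `x_i`, which are pairwise `J`-orthogonal. -/

open Matrix

noncomputable section

section JAdjoint

variable {m ι R : Type*} [Fintype m] [CommSemiring R]

/-- The adjoint `K^⋆ = Jᵀ Kᵀ J` of `K` with respect to the bilinear form `(u, v) ↦ uᵀ J v`. -/
def jAdjoint (J K : Matrix m m R) : Matrix m m R :=
  Jᵀ * Kᵀ * J

theorem transpose_mul_mul_eq_zero_of_isotropic (A : Matrix m ι R) (J : Matrix m m R)
    (hA : ∀ i j, Aᵀ i ⬝ᵥ (J *ᵥ Aᵀ j) = 0) :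
    Aᵀ * J * A = 0 := by
  ext i j
  rw [Matrix.mul_assoc, mul_apply']
  exact hA i j

variable [Fintype ι]

theorem mul_transpose_mul_jAdjoint_eq_zero {A : Matrix m ι R} {J : Matrix m m R}
    (hA : Aᵀ * J * A = 0) (N : Matrix m ι R) :
    (N * Aᵀ) * jAdjoint J (N * Aᵀ) = 0 := by
  have hAt : Aᵀ * Jᵀ * A = 0 := by
    simpa only [transpose_mul, transpose_transpose, Matrix.mul_assoc, transpose_zero]
      using congrArg transpose hA
  calc (N * Aᵀ) * jAdjoint J (N * Aᵀ) = N * (Aᵀ * Jᵀ * A) * Nᵀ * J := by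
        simp only [jAdjoint, transpose_mul, transpose_transpose, Matrix.mul_assoc]
    _ = 0 := by rw [hAt]; simp

theorem jAdjoint_mul_mul_eq_zero {B : Matrix m ι R} {J : Matrix m m R}
    (hB : Bᵀ * J * B = 0) (M : Matrix ι m R) :
    jAdjoint J (B * M) * (B * M) = 0 := by
  calc jAdjoint J (B * M) * (B * M) = Jᵀ * Mᵀ * (Bᵀ * J * B) * M := by
        simp only [jAdjoint, transpose_mul, Matrix.mul_assoc]
    _ = 0 := by rw [hB]; simp

end JAdjoint

theorem K_mul_Kstar_eq_zero_general {n : ℕ} (x : Fin n → (Fin n ⊕ Fin n) → ℝ)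
    (hLag : ∀ i j : Fin n, x i ⬝ᵥ (Jmat n *ᵥ x j) = 0) :
    (XR x * XLpinv x) * ((Jmat n)ᵀ * (XR x * XLpinv x)ᵀ * Jmat n) = 0 ∧
    ((Jmat n)ᵀ * (XR x * XLpinv x)ᵀ * Jmat n) * (XR x * XLpinv x) = 0 := by
  have hL : (XL x)ᵀ * Jmat n * XL x = 0 :=
    transpose_mul_mul_eq_zero_of_isotropic _ _ fun _ _ => hLag _ _
  have hR : (XR x)ᵀ * Jmat n * XR x = 0 :=
    transpose_mul_mul_eq_zero_of_isotropic _ _ fun _ _ => hLag _ _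
  refine ⟨?_, jAdjoint_mul_mul_eq_zero hR _⟩
  rw [XLpinv, ← Matrix.mul_assoc (XR x)]
  exact mul_transpose_mul_jAdjoint_eq_zero hL _

/-- For a basis of a Lagrangian subspace and `K = X_R X_L⁺`, one has
`K K^⋆ = K^⋆ K = 0` where `K^⋆ = Jᵀ Kᵀ J`. -/
theorem K_mul_Kstar_eq_zero {n : ℕ} (x : Fin n → (Fin n ⊕ Fin n) → ℝ)
    (hLI : LinearIndependent ℝ x)
    (hLag : ∀ i j : Fin n, x i ⬝ᵥ (Jmat n *ᵥ x j) = 0) :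
    (XR x * XLpinv x) * ((Jmat n)ᵀ * (XR x * XLpinv x)ᵀ * Jmat n) = 0 ∧
    ((Jmat n)ᵀ * (XR x * XLpinv x)ᵀ * Jmat n) * (XR x * XLpinv x) = 0 :=
  K_mul_Kstar_eq_zero_general x hLag
end
end

section
/- Let x_1, …, x_n ∈ ℝ^{2n} be an orthonormal family spanning a Lagrangian subspace, i.e. x_iᵀ x_j = δ_{ij} and x_iᵀ J x_j = 0 for all i, j. Then the matrix Ĥ := X_R X_Lᵀ + Jᵀ X_L X_Rᵀ J is nilpotent with Ĥⁿ = 0. -/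
open Matrix

noncomputable section

/-!
Write `Ĥ = A + B` with `A = X_R X_Lᵀ` and `B = Jᵀ Aᵀ J`. The Lagrangian condition gives
`X_Lᵀ Jᵀ X_L = 0` and `X_Rᵀ J X_R = 0`, hence `AB = BA = 0` and `Ĥⁿ = Aⁿ + Bⁿ`. Since `J` is
orthogonal, `Bⁿ = Jᵀ (Aⁿ)ᵀ J`. Finally `Aⁿ = X_R (X_Lᵀ X_R)ⁿ⁻¹ X_Lᵀ`, and by orthonormality
`X_Lᵀ X_R` is the `(n-1) × (n-1)` shift matrix, whose `(n-1)`-st power vanishes.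
-/

section MulEqZero

variable {R : Type*} [Semiring R] {a b : R}

theorem add_pow_succ_of_mul_eq_zero (hab : a * b = 0) (hba : b * a = 0) (p : ℕ) :
    (a + b) ^ (p + 1) = a ^ (p + 1) + b ^ (p + 1) := by
  induction p with
  | zero => simp
  | succ p ih =>
    have hab' : a ^ (p + 1) * b = 0 := by rw [pow_succ, mul_assoc, hab, mul_zero]
    have hba' : b ^ (p + 1) * a = 0 := by rw [pow_succ, mul_assoc, hba, mul_zero]
    rw [pow_succ, ih, add_mul, mul_add, mul_add, hab', hba', add_zero, zero_add, ← pow_succ,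
      ← pow_succ]

theorem add_pow_eq_zero_of_mul_eq_zero (hab : a * b = 0) (hba : b * a = 0) {k : ℕ}
    (ha : a ^ k = 0) (hb : b ^ k = 0) : (a + b) ^ k = 0 := by
  cases k with
  | zero => simpa using ha
  | succ p => rw [add_pow_succ_of_mul_eq_zero hab hba, ha, hb, add_zero]

end MulEqZero

namespace Matrix

variable {R : Type*} [Semiring R]

theorem mul_pow_succ_eq_mul_pow_mul {l m : Type*} [Fintype l] [Fintype m] [DecidableEq l]
    [DecidableEq m] (P : Matrix l m R) (Q : Matrix m l R) (k : ℕ) :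
    (P * Q) ^ (k + 1) = P * (Q * P) ^ k * Q := by
  induction k with
  | zero => simp
  | succ k ih => rw [pow_succ, ih, pow_succ]; simp only [Matrix.mul_assoc]

theorem pow_apply_eq_zero_of_strictLowerTriangular {m : ℕ} {M : Matrix (Fin m) (Fin m) R}
    (hM : ∀ i j, i ≤ j → M i j = 0) (p : ℕ) :
    ∀ i j : Fin m, (i : ℕ) < j + p → (M ^ p) i j = 0 := by
  induction p with
  | zero => intro i j hij; simp [one_apply_ne (Fin.ne_of_lt hij)]
  | succ p ih =>
    intro i j hij
    rw [pow_succ, mul_apply]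
    refine Finset.sum_eq_zero fun l _ => ?_
    rcases lt_or_ge j l with hjl | hlj
    · rw [ih i l (by omega), zero_mul]
    · rw [hM l j hlj, mul_zero]

theorem pow_eq_zero_of_strictLowerTriangular {m : ℕ} {M : Matrix (Fin m) (Fin m) R}
    (hM : ∀ i j, i ≤ j → M i j = 0) {p : ℕ} (hp : m ≤ p) : M ^ p = 0 := by
  ext i j
  exact pow_apply_eq_zero_of_strictLowerTriangular hM p i j (by omega)

end Matrix

section Jmat

variable (n : ℕ)

theorem Jmat_transpose_mul_self : (Jmat n)ᵀ * Jmat n = 1 := by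
  simp [Jmat, fromBlocks_transpose, fromBlocks_multiply, ← fromBlocks_one]

theorem Jmat_mul_transpose_self : Jmat n * (Jmat n)ᵀ = 1 := by
  simp [Jmat, fromBlocks_transpose, fromBlocks_multiply, ← fromBlocks_one]

theorem Jmat_transpose_conj_pow (M : Matrix (Fin n ⊕ Fin n) (Fin n ⊕ Fin n) ℝ) (k : ℕ) :
    ((Jmat n)ᵀ * M * Jmat n) ^ k = (Jmat n)ᵀ * M ^ k * Jmat n :=
  Units.conj_pow ⟨(Jmat n)ᵀ, Jmat n, Jmat_transpose_mul_self n, Jmat_mul_transpose_self n⟩ M k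

end Jmat

section LagrangianFrame

variable {n : ℕ} (x : Fin n → (Fin n ⊕ Fin n) → ℝ)

theorem XL_transpose_mul_XR_apply_eq_zero
    (hON : ∀ i j : Fin n, x i ⬝ᵥ x j = if i = j then 1 else 0)
    (i j : Fin (n - 1)) (hij : i ≤ j) : ((XL x)ᵀ * XR x) i j = 0 := by
  change x _ ⬝ᵥ x _ = 0
  rw [hON, if_neg]
  simp only [Fin.ext_iff]
  have : (i : ℕ) ≤ j := hij
  omega

theorem XR_mul_XL_transpose_pow_eq_zero
    (hON : ∀ i j : Fin n, x i ⬝ᵥ x j = if i = j then 1 else 0) :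
    (XR x * (XL x)ᵀ) ^ n = 0 := by
  obtain _ | k := n
  · exact Subsingleton.elim _ _
  rw [mul_pow_succ_eq_mul_pow_mul,
    pow_eq_zero_of_strictLowerTriangular (p := k) (XL_transpose_mul_XR_apply_eq_zero x hON)
      (by omega),
    Matrix.mul_zero, Matrix.zero_mul]

theorem XL_transpose_mul_Jmat_transpose_mul_XL
    (hLag : ∀ i j : Fin n, x i ⬝ᵥ (Jmat n *ᵥ x j) = 0) :
    (XL x)ᵀ * (Jmat n)ᵀ * XL x = 0 := by
  have h : (XL x)ᵀ * Jmat n * XL x = 0 := by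
    ext i j
    rw [Matrix.mul_assoc]
    exact hLag _ _
  simpa [transpose_mul, Matrix.mul_assoc] using congrArg transpose h

theorem XR_transpose_mul_Jmat_mul_XR
    (hLag : ∀ i j : Fin n, x i ⬝ᵥ (Jmat n *ᵥ x j) = 0) :
    (XR x)ᵀ * Jmat n * XR x = 0 := by
  ext i j
  rw [Matrix.mul_assoc]
  exact hLag _ _

end LagrangianFrame

/-- For an orthonormal basis of a Lagrangian subspace, the matrix
`Ĥ = X_R X_Lᵀ + Jᵀ X_L X_Rᵀ J` is nilpotent with `Ĥ^n = 0`. -/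
theorem Hhat_nilpotent {n : ℕ} (x : Fin n → (Fin n ⊕ Fin n) → ℝ)
    (hON : ∀ i j : Fin n, x i ⬝ᵥ x j = if i = j then 1 else 0)
    (hLag : ∀ i j : Fin n, x i ⬝ᵥ (Jmat n *ᵥ x j) = 0) :
    (XR x * (XL x)ᵀ + (Jmat n)ᵀ * (XL x * (XR x)ᵀ) * Jmat n) ^ n = 0 := by
  refine add_pow_eq_zero_of_mul_eq_zero ?_ ?_ (XR_mul_XL_transpose_pow_eq_zero x hON) ?_
  · calc XR x * (XL x)ᵀ * ((Jmat n)ᵀ * (XL x * (XR x)ᵀ) * Jmat n)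
        = XR x * ((XL x)ᵀ * (Jmat n)ᵀ * XL x) * (XR x)ᵀ * Jmat n := by
          simp only [Matrix.mul_assoc]
      _ = 0 := by rw [XL_transpose_mul_Jmat_transpose_mul_XL x hLag]; simp
  · calc (Jmat n)ᵀ * (XL x * (XR x)ᵀ) * Jmat n * (XR x * (XL x)ᵀ)
        = (Jmat n)ᵀ * XL x * ((XR x)ᵀ * Jmat n * XR x) * (XL x)ᵀ := by
          simp only [Matrix.mul_assoc]
      _ = 0 := by rw [XR_transpose_mul_Jmat_mul_XR x hLag]; simp
  · have hAt : XL x * (XR x)ᵀ = (XR x * (XL x)ᵀ)ᵀ := by rw [transpose_mul, transpose_transpose]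
    rw [Jmat_transpose_conj_pow, hAt, ← transpose_pow, XR_mul_XL_transpose_pow_eq_zero x hON]
    simp
end
end

section
/- Let x_1, …, x_n ∈ ℝ^{2n} be linearly independent vectors spanning a Lagrangian subspace, i.e. x_iᵀ J x_j = 0 for all i, j. Let K := X_R X_L⁺ and Ĥ := K + Jᵀ Kᵀ J. Then ‖Ĥ‖₂ = ‖K‖₂. -/
open Matrix

noncomputable section

/-- The spectral norm (Euclidean operator norm) of a real square matrix. -/
def specNorm {m : Type*} [Fintype m] [DecidableEq m] (M : Matrix m m ℝ) : ℝ :=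
  ‖Matrix.toEuclideanCLM (𝕜 := ℝ) M‖

/-! ### Auxiliary lemmas -/

open scoped Matrix.Norms.L2Operator

set_option linter.unusedSectionVars false

namespace SpecHelp

variable {m k : Type*} [Fintype m] [DecidableEq m] [Fintype k] [DecidableEq k]

lemma nsq (v : m → ℝ) :
    ‖(EuclideanSpace.equiv m ℝ).symm v‖ ^ 2 = v ⬝ᵥ v := by
  rw [EuclideanSpace.norm_eq, Real.sq_sqrt (by positivity)]
  simp [dotProduct, sq]

lemma cross (M N : Matrix m k ℝ) (v : k → ℝ) :
    (M *ᵥ v) ⬝ᵥ (N *ᵥ v) = v ⬝ᵥ ((Mᵀ * N) *ᵥ v) := by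
  conv_rhs => rw [← mulVec_mulVec, dotProduct_mulVec, vecMul_transpose]

lemma opnorm_le_of (M : Matrix m m ℝ) {C : ℝ} (hC : 0 ≤ C)
    (h : ∀ v : m → ℝ, ‖(EuclideanSpace.equiv m ℝ).symm (M *ᵥ v)‖
      ≤ C * ‖(EuclideanSpace.equiv m ℝ).symm v‖) :
    ‖M‖ ≤ C := by
  rw [Matrix.l2_opNorm_def]
  exact ContinuousLinearMap.opNorm_le_bound _ hC fun v => h v

lemma mulVec_norm_le (M : Matrix m m ℝ) (v : m → ℝ) :
    ‖(EuclideanSpace.equiv m ℝ).symm (M *ᵥ v)‖ ≤ ‖M‖ * ‖(EuclideanSpace.equiv m ℝ).symm v‖ :=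
  M.l2_opNorm_mulVec ((EuclideanSpace.equiv m ℝ).symm v)

lemma norm_transpose (M : Matrix m m ℝ) : ‖Mᵀ‖ = ‖M‖ := by
  rw [← Matrix.l2_opNorm_conjTranspose M]
  congr 1

lemma inner_dot (u w : m → ℝ) :
    (inner ℝ ((EuclideanSpace.equiv m ℝ).symm u) ((EuclideanSpace.equiv m ℝ).symm w) : ℝ)
      = u ⬝ᵥ w := by
  simp [PiLp.inner_apply, dotProduct, mul_comm]

lemma dot_le (R : Matrix m m ℝ) (hRT : Rᵀ = R) (hRR : R * R = R) (v : m → ℝ) :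
    v ⬝ᵥ (R *ᵥ v) ≤ v ⬝ᵥ v := by
  have hww : (R *ᵥ v) ⬝ᵥ (R *ᵥ v) = v ⬝ᵥ (R *ᵥ v) := by
    rw [cross, hRT, hRR]
  have h0 : 0 ≤ (R *ᵥ v) ⬝ᵥ (R *ᵥ v) := Fintype.sum_nonneg fun i => mul_self_nonneg _
  have hvv : 0 ≤ v ⬝ᵥ v := Fintype.sum_nonneg fun i => mul_self_nonneg _
  have hcs : (v ⬝ᵥ (R *ᵥ v)) * (v ⬝ᵥ (R *ᵥ v)) ≤ (v ⬝ᵥ v) * ((R *ᵥ v) ⬝ᵥ (R *ᵥ v)) := by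
    have := real_inner_mul_inner_self_le ((EuclideanSpace.equiv m ℝ).symm v)
      ((EuclideanSpace.equiv m ℝ).symm (R *ᵥ v))
    rw [inner_dot, inner_dot, inner_dot] at this
    exact this
  rcases eq_or_lt_of_le (hww ▸ h0) with h | h
  · linarith
  · nlinarith

lemma gram_posdef (M : Matrix m k ℝ) (hM : ∀ c : k → ℝ, M *ᵥ c = 0 → c = 0) :
    (Mᵀ * M).PosDef := by
  refine posDef_iff_dotProduct_mulVec.mpr ⟨?_, fun c hc => ?_⟩
  · show (Mᵀ * M)ᴴ = Mᵀ * M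
    have : (Mᵀ * M)ᴴ = (Mᵀ * M)ᵀ := by ext i j; simp [conjTranspose_apply]
    rw [this, transpose_mul, transpose_transpose]
  · have h1 : star c ⬝ᵥ ((Mᵀ * M) *ᵥ c) = (M *ᵥ c) ⬝ᵥ (M *ᵥ c) := by
      rw [star_trivial]; exact (cross M M c).symm
    rw [h1]
    have hw : M *ᵥ c ≠ 0 := fun h => hc (hM c h)
    have h2 : 0 ≤ (M *ᵥ c) ⬝ᵥ (M *ᵥ c) := Fintype.sum_nonneg fun i => mul_self_nonneg _
    exact lt_of_le_of_ne h2 fun h => hw (dotProduct_self_eq_zero.mp h.symm)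

lemma col_inj {n : ℕ} {x : Fin n → (Fin n ⊕ Fin n) → ℝ} (hLI : LinearIndependent ℝ x)
    (f : k → Fin n) (hf : Function.Injective f)
    (c : k → ℝ) (h : (Matrix.of fun i j => x (f j) i) *ᵥ c = 0) : c = 0 := by
  have hli := hLI.comp f hf
  have hz : ∑ i, c i • (x ∘ f) i = 0 := by
    funext a
    have := congrFun h a
    simpa [mulVec, dotProduct, Finset.sum_apply, mul_comm] using this
  have := Fintype.linearIndependent_iff.mp hli c hz
  funext i; exact this i

lemma gram_isUnit {n : ℕ} {x : Fin n → (Fin n ⊕ Fin n) → ℝ} (hLI : LinearIndependent ℝ x)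
    (f : k → Fin n) (hf : Function.Injective f) :
    IsUnit (((Matrix.of fun i j => x (f j) i) : Matrix (Fin n ⊕ Fin n) k ℝ)ᵀ
      * (Matrix.of fun i j => x (f j) i)) :=
  (gram_posdef _ fun c hc => col_inj hLI f hf c hc).isUnit

lemma JmatT (n : ℕ) : (Jmat n)ᵀ = -Jmat n := by
  simp [Jmat, fromBlocks_transpose, fromBlocks_neg]

lemma Jmat_TJ (n : ℕ) : (Jmat n)ᵀ * Jmat n = 1 := by
  rw [JmatT]
  simp [Jmat, fromBlocks_multiply, fromBlocks_neg, ← fromBlocks_one]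

lemma Jmat_JT (n : ℕ) : Jmat n * (Jmat n)ᵀ = 1 := by
  rw [JmatT]
  simp [Jmat, fromBlocks_multiply, fromBlocks_neg, ← fromBlocks_one]

end SpecHelp

/-- For a basis of a Lagrangian subspace, `K = X_R X_L⁺` and `Ĥ = K + Jᵀ Kᵀ J` have the
same spectral norm. -/
theorem specNorm_Hhat_eq_specNorm_K {n : ℕ} (x : Fin n → (Fin n ⊕ Fin n) → ℝ)
    (hLI : LinearIndependent ℝ x)
    (hLag : ∀ i j : Fin n, x i ⬝ᵥ (Jmat n *ᵥ x j) = 0) :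
    specNorm (Hhat x) = specNorm (XR x * XLpinv x) := by
  classical
  -- basic J facts
  have hIJ : ∀ i j : Fin n, x i ⬝ᵥ ((Jmat n)ᵀ *ᵥ x j) = 0 := fun i j => by
    rw [SpecHelp.JmatT n, neg_mulVec, dotProduct_neg, hLag i j, neg_zero]
  have hJJ'' : ∀ {p : Type} [Fintype p] [DecidableEq p]
      (C : Matrix (Fin n ⊕ Fin n) p ℝ), Jmat n * ((Jmat n)ᵀ * C) = C := by
    intro p _ _ C; rw [← Matrix.mul_assoc, SpecHelp.Jmat_JT, Matrix.one_mul]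
  -- invertibility of the Gram matrices
  have hgl : IsUnit ((XL x)ᵀ * XL x) :=
    SpecHelp.gram_isUnit hLI (fun j : Fin (n-1) => ⟨j.1, lt_of_lt_of_le j.2 (Nat.sub_le n 1)⟩)
      (fun a b hab => by apply Fin.ext; have := congrArg Fin.val hab; simpa using this)
  have hgr : IsUnit ((XR x)ᵀ * XR x) :=
    SpecHelp.gram_isUnit hLI (fun j : Fin (n-1) => ⟨j.1 + 1, by have := j.2; omega⟩)
      (fun a b hab => by apply Fin.ext; have := congrArg Fin.val hab; simp at this; omega)
  have hdl : IsUnit ((XL x)ᵀ * XL x).det := (Matrix.isUnit_iff_isUnit_det _).mp hgl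
  have hdr : IsUnit ((XR x)ᵀ * XR x).det := (Matrix.isUnit_iff_isUnit_det _).mp hgr
  have hpinvL : XLpinv x * XL x = 1 := by
    show (((XL x)ᵀ * XL x)⁻¹ * (XL x)ᵀ) * XL x = 1
    rw [Matrix.mul_assoc]
    exact Matrix.nonsing_inv_mul _ hdl
  set RS : Matrix (Fin (n-1)) (Fin n ⊕ Fin n) ℝ := ((XR x)ᵀ * XR x)⁻¹ * (XR x)ᵀ with hRS
  have hpinvR : RS * XR x = 1 := by
    rw [hRS, Matrix.mul_assoc]
    exact Matrix.nonsing_inv_mul _ hdr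
  have hpinvL' : ∀ {p : Type} [Fintype p] [DecidableEq p]
      (C : Matrix (Fin (n-1)) p ℝ), XLpinv x * (XL x * C) = C := by
    intro p _ _ C; rw [← Matrix.mul_assoc, hpinvL, Matrix.one_mul]
  have hpinvR' : ∀ {p : Type} [Fintype p] [DecidableEq p]
      (C : Matrix (Fin (n-1)) p ℝ), RS * (XR x * C) = C := by
    intro p _ _ C; rw [← Matrix.mul_assoc, hpinvR, Matrix.one_mul]
  -- the matrices
  set A := XR x * XLpinv x with hA
  set B := (Jmat n)ᵀ * Aᵀ * Jmat n with hB
  set P := XL x * XLpinv x with hP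
  set S := XR x * RS with hS
  set Q := (Jmat n)ᵀ * S * Jmat n with hQ
  have hHhat : Hhat x = A + B := by rw [hB, hA]; rfl
  -- symmetry of inverse Gram matrices
  have hGTL : (((XL x)ᵀ * XL x)⁻¹)ᵀ = ((XL x)ᵀ * XL x)⁻¹ := by
    rw [Matrix.transpose_nonsing_inv, Matrix.transpose_mul, Matrix.transpose_transpose]
  have hGTR : (((XR x)ᵀ * XR x)⁻¹)ᵀ = ((XR x)ᵀ * XR x)⁻¹ := by
    rw [Matrix.transpose_nonsing_inv, Matrix.transpose_mul, Matrix.transpose_transpose]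
  -- projections
  have hPT : Pᵀ = P := by
    rw [hP]
    simp only [XLpinv, transpose_mul, transpose_transpose, hGTL, Matrix.mul_assoc]
  have hST : Sᵀ = S := by
    rw [hS, hRS]
    simp only [transpose_mul, transpose_transpose, hGTR, Matrix.mul_assoc]
  have hQT : Qᵀ = Q := by
    rw [hQ]
    simp only [transpose_mul, transpose_transpose, hST, Matrix.mul_assoc]
  have hPP : P * P = P := by
    rw [hP]; simp only [Matrix.mul_assoc]; rw [hpinvL']
  have hSS : S * S = S := by
    rw [hS]; simp only [Matrix.mul_assoc]; rw [hpinvR']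
  have hQQ : Q * Q = Q := by
    rw [hQ]; simp only [Matrix.mul_assoc]
    rw [hJJ'', ← Matrix.mul_assoc S S, hSS]
  have hAP : A * P = A := by
    rw [hA, hP]; simp only [Matrix.mul_assoc]; rw [hpinvL']
  have hSA : S * A = A := by
    rw [hS, hA]; simp only [Matrix.mul_assoc]; rw [hpinvR']
  have hAS : Aᵀ * S = Aᵀ := by
    rw [← hST, ← Matrix.transpose_mul, hSA]
  have hBQ : B * Q = B := by
    rw [hB, hQ]; simp only [Matrix.mul_assoc]
    rw [hJJ'', ← Matrix.mul_assoc Aᵀ S (Jmat n), hAS]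
  -- zero-block identities from the Lagrangian condition
  have z1 : (XR x)ᵀ * ((Jmat n)ᵀ * XL x) = 0 := by
    ext i j
    have h : ((XR x)ᵀ * ((Jmat n)ᵀ * XL x)) i j
        = x ⟨i.1 + 1, by have := i.2; omega⟩ ⬝ᵥ
          ((Jmat n)ᵀ *ᵥ x ⟨j.1, lt_of_lt_of_le j.2 (Nat.sub_le n 1)⟩) := by
      simp [Matrix.mul_apply, Matrix.transpose_apply, XR, XL, Matrix.mulVec, dotProduct,
        Finset.mul_sum]
    rw [h, hIJ]
    rfl
  have z2 : (XL x)ᵀ * ((Jmat n)ᵀ * XR x) = 0 := by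
    ext i j
    have h : ((XL x)ᵀ * ((Jmat n)ᵀ * XR x)) i j
        = x ⟨i.1, lt_of_lt_of_le i.2 (Nat.sub_le n 1)⟩ ⬝ᵥ
          ((Jmat n)ᵀ *ᵥ x ⟨j.1 + 1, by have := j.2; omega⟩) := by
      simp [Matrix.mul_apply, Matrix.transpose_apply, XR, XL, Matrix.mulVec, dotProduct,
        Finset.mul_sum]
    rw [h, hIJ]
    rfl
  have z1' : ∀ {p : Type} [Fintype p] [DecidableEq p]
      (C : Matrix (Fin (n-1)) p ℝ), (XR x)ᵀ * ((Jmat n)ᵀ * (XL x * C)) = 0 := by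
    intro p _ _ C
    rw [← Matrix.mul_assoc ((Jmat n)ᵀ) (XL x) C, ← Matrix.mul_assoc, z1, Matrix.zero_mul]
  have z2' : ∀ {p : Type} [Fintype p] [DecidableEq p]
      (C : Matrix (Fin (n-1)) p ℝ), (XL x)ᵀ * ((Jmat n)ᵀ * (XR x * C)) = 0 := by
    intro p _ _ C
    rw [← Matrix.mul_assoc ((Jmat n)ᵀ) (XR x) C, ← Matrix.mul_assoc, z2, Matrix.zero_mul]
  have hAT : Aᵀ = XL x * ((((XL x)ᵀ * XL x)⁻¹) * (XR x)ᵀ) := by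
    rw [hA]
    simp only [XLpinv, transpose_mul, transpose_transpose, hGTL, Matrix.mul_assoc]
  have hAB0 : Aᵀ * B = 0 := by
    rw [hB, hAT]
    simp only [Matrix.mul_assoc]
    rw [z1']
    simp
  have hPQ0 : P * Q = 0 := by
    rw [hP, hQ, hS, hRS]
    simp only [XLpinv, Matrix.mul_assoc]
    rw [z2']
    simp
  have hQP0 : Q * P = 0 := by
    have h := congrArg Matrix.transpose hPQ0
    rwa [Matrix.transpose_mul, hPT, hQT, Matrix.transpose_zero] at h
  -- now the norm estimates
  have hsp : ∀ M : Matrix (Fin n ⊕ Fin n) (Fin n ⊕ Fin n) ℝ, specNorm M = ‖M‖ := by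
    intro M
    simp only [specNorm]
    exact (Matrix.cstar_norm_def M).symm
  rw [hsp, hsp, hHhat]
  -- ‖B‖ ≤ ‖A‖
  have hJn : ‖Jmat n‖ ≤ 1 := by
    refine SpecHelp.opnorm_le_of _ zero_le_one fun v => ?_
    have h2 : ‖(EuclideanSpace.equiv (Fin n ⊕ Fin n) ℝ).symm (Jmat n *ᵥ v)‖ ^ 2
        = ‖(EuclideanSpace.equiv (Fin n ⊕ Fin n) ℝ).symm v‖ ^ 2 := by
      rw [SpecHelp.nsq, SpecHelp.nsq, SpecHelp.cross, SpecHelp.Jmat_TJ, Matrix.one_mulVec]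
    have h3 := congrArg Real.sqrt h2
    rw [Real.sqrt_sq (norm_nonneg _), Real.sqrt_sq (norm_nonneg _)] at h3
    rw [h3, one_mul]
  have hJTn : ‖(Jmat n)ᵀ‖ ≤ 1 := by rw [SpecHelp.norm_transpose]; exact hJn
  have hBA : ‖B‖ ≤ ‖A‖ := by
    rw [hB]
    calc ‖(Jmat n)ᵀ * Aᵀ * Jmat n‖ ≤ ‖(Jmat n)ᵀ * Aᵀ‖ * ‖Jmat n‖ := Matrix.l2_opNorm_mul _ _
      _ ≤ (‖(Jmat n)ᵀ‖ * ‖Aᵀ‖) * ‖Jmat n‖ :=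
          mul_le_mul_of_nonneg_right (Matrix.l2_opNorm_mul _ _) (norm_nonneg _)
      _ ≤ (1 * ‖Aᵀ‖) * 1 :=
          mul_le_mul (mul_le_mul hJTn le_rfl (norm_nonneg _) zero_le_one) hJn
            (norm_nonneg _) (by positivity)
      _ = ‖A‖ := by rw [SpecHelp.norm_transpose, one_mul, mul_one]
  -- Pythagoras for `(A + B) *ᵥ v`
  have h1 : ∀ v : (Fin n ⊕ Fin n) → ℝ, ((A + B) *ᵥ v) ⬝ᵥ ((A + B) *ᵥ v)
      = (A *ᵥ v) ⬝ᵥ (A *ᵥ v) + (B *ᵥ v) ⬝ᵥ (B *ᵥ v) := by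
    intro v
    have hc : (A *ᵥ v) ⬝ᵥ (B *ᵥ v) = 0 := by
      rw [SpecHelp.cross, hAB0, Matrix.zero_mulVec, dotProduct_zero]
    have hc' : (B *ᵥ v) ⬝ᵥ (A *ᵥ v) = 0 := by rw [dotProduct_comm]; exact hc
    rw [Matrix.add_mulVec, dotProduct_add, add_dotProduct, add_dotProduct, hc, hc']
    ring
  refine le_antisymm (SpecHelp.opnorm_le_of _ (norm_nonneg _) fun v => ?_)
    (SpecHelp.opnorm_le_of _ (norm_nonneg _) fun v => ?_)
  · -- upper bound
    have e1 : ‖(EuclideanSpace.equiv (Fin n ⊕ Fin n) ℝ).symm ((A + B) *ᵥ v)‖ ^ 2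
        = ‖(EuclideanSpace.equiv (Fin n ⊕ Fin n) ℝ).symm (A *ᵥ v)‖ ^ 2
          + ‖(EuclideanSpace.equiv (Fin n ⊕ Fin n) ℝ).symm (B *ᵥ v)‖ ^ 2 := by
      rw [SpecHelp.nsq, SpecHelp.nsq, SpecHelp.nsq, h1 v]
    have hAv : ‖(EuclideanSpace.equiv (Fin n ⊕ Fin n) ℝ).symm (A *ᵥ v)‖
        ≤ ‖A‖ * ‖(EuclideanSpace.equiv (Fin n ⊕ Fin n) ℝ).symm (P *ᵥ v)‖ := by
      rw [show A *ᵥ v = A *ᵥ (P *ᵥ v) by rw [Matrix.mulVec_mulVec, hAP]]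
      exact SpecHelp.mulVec_norm_le A (P *ᵥ v)
    have hBv : ‖(EuclideanSpace.equiv (Fin n ⊕ Fin n) ℝ).symm (B *ᵥ v)‖
        ≤ ‖A‖ * ‖(EuclideanSpace.equiv (Fin n ⊕ Fin n) ℝ).symm (Q *ᵥ v)‖ := by
      rw [show B *ᵥ v = B *ᵥ (Q *ᵥ v) by rw [Matrix.mulVec_mulVec, hBQ]]
      exact le_trans (SpecHelp.mulVec_norm_le B (Q *ᵥ v))
        (mul_le_mul_of_nonneg_right hBA (norm_nonneg _))
    have hp2 : ‖(EuclideanSpace.equiv (Fin n ⊕ Fin n) ℝ).symm (P *ᵥ v)‖ ^ 2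
        = v ⬝ᵥ (P *ᵥ v) := by
      rw [SpecHelp.nsq, SpecHelp.cross, hPT, hPP]
    have hq2 : ‖(EuclideanSpace.equiv (Fin n ⊕ Fin n) ℝ).symm (Q *ᵥ v)‖ ^ 2
        = v ⬝ᵥ (Q *ᵥ v) := by
      rw [SpecHelp.nsq, SpecHelp.cross, hQT, hQQ]
    have hRle : v ⬝ᵥ (P *ᵥ v) + v ⬝ᵥ (Q *ᵥ v) ≤ v ⬝ᵥ v := by
      have hsum := SpecHelp.dot_le (P + Q)
        (by rw [Matrix.transpose_add, hPT, hQT])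
        (by rw [Matrix.add_mul, Matrix.mul_add, Matrix.mul_add, hPP, hQQ, hPQ0, hQP0]
            abel) v
      rwa [Matrix.add_mulVec, dotProduct_add] at hsum
    have hnv : ‖(EuclideanSpace.equiv (Fin n ⊕ Fin n) ℝ).symm v‖ ^ 2 = v ⬝ᵥ v :=
      SpecHelp.nsq v
    have sA : ‖(EuclideanSpace.equiv (Fin n ⊕ Fin n) ℝ).symm (A *ᵥ v)‖ ^ 2
        ≤ (‖A‖ * ‖(EuclideanSpace.equiv (Fin n ⊕ Fin n) ℝ).symm (P *ᵥ v)‖) ^ 2 :=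
      pow_le_pow_left₀ (norm_nonneg _) hAv 2
    have sB : ‖(EuclideanSpace.equiv (Fin n ⊕ Fin n) ℝ).symm (B *ᵥ v)‖ ^ 2
        ≤ (‖A‖ * ‖(EuclideanSpace.equiv (Fin n ⊕ Fin n) ℝ).symm (Q *ᵥ v)‖) ^ 2 :=
      pow_le_pow_left₀ (norm_nonneg _) hBv 2
    have hfin : ‖(EuclideanSpace.equiv (Fin n ⊕ Fin n) ℝ).symm ((A + B) *ᵥ v)‖ ^ 2
        ≤ (‖A‖ * ‖(EuclideanSpace.equiv (Fin n ⊕ Fin n) ℝ).symm v‖) ^ 2 := by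
      nlinarith [e1, sA, sB, hp2, hq2, hRle, hnv, sq_nonneg ‖A‖]
    calc ‖(EuclideanSpace.equiv (Fin n ⊕ Fin n) ℝ).symm ((A + B) *ᵥ v)‖
        = Real.sqrt (‖(EuclideanSpace.equiv (Fin n ⊕ Fin n) ℝ).symm ((A + B) *ᵥ v)‖ ^ 2) :=
          (Real.sqrt_sq (norm_nonneg _)).symm
      _ ≤ Real.sqrt ((‖A‖ * ‖(EuclideanSpace.equiv (Fin n ⊕ Fin n) ℝ).symm v‖) ^ 2) :=
          Real.sqrt_le_sqrt hfin
      _ = ‖A‖ * ‖(EuclideanSpace.equiv (Fin n ⊕ Fin n) ℝ).symm v‖ :=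
          Real.sqrt_sq (by positivity)
  · -- lower bound
    have e1 : ‖(EuclideanSpace.equiv (Fin n ⊕ Fin n) ℝ).symm ((A + B) *ᵥ v)‖ ^ 2
        = ‖(EuclideanSpace.equiv (Fin n ⊕ Fin n) ℝ).symm (A *ᵥ v)‖ ^ 2
          + ‖(EuclideanSpace.equiv (Fin n ⊕ Fin n) ℝ).symm (B *ᵥ v)‖ ^ 2 := by
      rw [SpecHelp.nsq, SpecHelp.nsq, SpecHelp.nsq, h1 v]
    have h2 : ‖(EuclideanSpace.equiv (Fin n ⊕ Fin n) ℝ).symm (A *ᵥ v)‖ ^ 2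
        ≤ ‖(EuclideanSpace.equiv (Fin n ⊕ Fin n) ℝ).symm ((A + B) *ᵥ v)‖ ^ 2 := by
      have := sq_nonneg ‖(EuclideanSpace.equiv (Fin n ⊕ Fin n) ℝ).symm (B *ᵥ v)‖
      linarith [e1]
    calc ‖(EuclideanSpace.equiv (Fin n ⊕ Fin n) ℝ).symm (A *ᵥ v)‖
        = Real.sqrt (‖(EuclideanSpace.equiv (Fin n ⊕ Fin n) ℝ).symm (A *ᵥ v)‖ ^ 2) :=
          (Real.sqrt_sq (norm_nonneg _)).symm
      _ ≤ Real.sqrt (‖(EuclideanSpace.equiv (Fin n ⊕ Fin n) ℝ).symm ((A + B) *ᵥ v)‖ ^ 2) :=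
          Real.sqrt_le_sqrt h2
      _ = ‖(EuclideanSpace.equiv (Fin n ⊕ Fin n) ℝ).symm ((A + B) *ᵥ v)‖ :=
          Real.sqrt_sq (norm_nonneg _)
      _ ≤ ‖A + B‖ * ‖(EuclideanSpace.equiv (Fin n ⊕ Fin n) ℝ).symm v‖ :=
          SpecHelp.mulVec_norm_le (A + B) v
end
end

section
/- Let x_1, …, x_n ∈ ℝ^{2n} be linearly independent vectors spanning a Lagrangian subspace, i.e. x_iᵀ J x_j = 0 for all i, j, and let Ĥ := X_R X_L⁺ + Jᵀ (X_R X_L⁺)ᵀ J. Then ‖Ĥ‖₂ ≤ ‖H‖₂ for every skew-Hamiltonian matrix H ∈ ℝ^{2n×2n} satisfying H x_k = x_{k+1} for all k = 1, …, n-1. -/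
/-!
Let `P = X_L X_L⁺` be the orthogonal projection onto `span {x₁, …, x_{n-1}}`
and `Q = Jᵀ P J`, again an orthogonal projection. The Krylov relations say
`H X_L = X_R`, so `X_R X_L⁺ = H P`, and skew-Hamiltonicity turns the second
summand of `Ĥ` into `Q H`: thus `Ĥ = H P + Q H`. The Lagrangian condition
`X_Lᵀ J X_R = 0` gives `Q H P = 0`, so for every `v` the vectors `H P v` and
`Q H (1 - P) v` are orthogonal and
`‖Ĥ v‖² ≤ ‖H‖² (‖P v‖² + ‖(1 - P) v‖²) = ‖H‖² ‖v‖²`.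
-/

open Matrix

noncomputable section

open scoped InnerProductSpace

namespace ContinuousLinearMap

variable {𝕜 E : Type*} [RCLike 𝕜] [NormedAddCommGroup E] [InnerProductSpace 𝕜 E]
  [CompleteSpace E]

theorem inner_apply_sub_apply_eq_zero_of_isStarProjection {p : E →L[𝕜] E}
    (hp : IsStarProjection p) (v : E) : ⟪p v, v - p v⟫_𝕜 = 0 := by
  have hpp : p (p v) = p v := DFunLike.congr_fun hp.isIdempotentElem.eq v
  rw [hp.isSelfAdjoint.isSymmetric.apply_clm, map_sub, hpp, sub_self, inner_zero_right]

theorem norm_mul_add_mul_le_of_isStarProjection {T p q : E →L[𝕜] E}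
    (hp : IsStarProjection p) (hq : IsStarProjection q) (hqTp : q * T * p = 0) :
    ‖T * p + q * T‖ ≤ ‖T‖ := by
  have pythagoras (a b : E) (h : ⟪a, b⟫_𝕜 = 0) : ‖a + b‖ ^ 2 = ‖a‖ ^ 2 + ‖b‖ ^ 2 := by
    simp [@norm_add_sq 𝕜, h]
  refine opNorm_le_bound _ (norm_nonneg T) fun v => ?_
  set w := v - p v
  have hqTpv : q (T (p v)) = 0 := DFunLike.congr_fun hqTp v
  have happly : (T * p + q * T) v = T (p v) + q (T w) := by
    simp [w, hqTpv]
  have horth : ⟪T (p v), q (T w)⟫_𝕜 = 0 := by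
    rw [← hq.isSelfAdjoint.isSymmetric.apply_clm, hqTpv, inner_zero_left]
  have hv : ‖p v‖ ^ 2 + ‖w‖ ^ 2 = ‖v‖ ^ 2 := by
    rw [← pythagoras _ _ (inner_apply_sub_apply_eq_zero_of_isStarProjection hp v),
      add_sub_cancel]
  have hTw : ‖q (T w)‖ ≤ ‖T‖ * ‖w‖ :=
    calc ‖q (T w)‖ ≤ ‖q‖ * ‖T w‖ := q.le_opNorm _
      _ ≤ 1 * (‖T‖ * ‖w‖) := by
        gcongr
        exacts [hq.norm_le, T.le_opNorm w]
      _ = ‖T‖ * ‖w‖ := one_mul _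
  have hTpv : ‖T (p v)‖ ≤ ‖T‖ * ‖p v‖ := T.le_opNorm _
  refine le_of_sq_le_sq ?_ (by positivity)
  calc ‖(T * p + q * T) v‖ ^ 2 = ‖T (p v)‖ ^ 2 + ‖q (T w)‖ ^ 2 := by
        rw [happly, pythagoras _ _ horth]
    _ ≤ (‖T‖ * ‖p v‖) ^ 2 + (‖T‖ * ‖w‖) ^ 2 := by gcongr
    _ = (‖T‖ * ‖v‖) ^ 2 := by rw [mul_pow, mul_pow, ← mul_add, hv, mul_pow]

end ContinuousLinearMap

theorem specNorm_mul_add_mul_le_of_isStarProjection {m : Type*} [Fintype m] [DecidableEq m]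
    {H P Q : Matrix m m ℝ} (hP : IsStarProjection P) (hQ : IsStarProjection Q)
    (hQHP : Q * H * P = 0) : specNorm (H * P + Q * H) ≤ specNorm H := by
  simp only [specNorm, map_add, map_mul]
  exact ContinuousLinearMap.norm_mul_add_mul_le_of_isStarProjection
    (hP.map _) (hQ.map _) (by rw [← map_mul, ← map_mul, hQHP, map_zero])

theorem IsStarProjection.conjugate' {R : Type*} [Monoid R] [StarMul R] {p u : R}
    (hp : IsStarProjection p) (hu : u * star u = 1) : IsStarProjection (star u * p * u) where
  isIdempotentElem := by
    rw [IsIdempotentElem, show star u * p * u * (star u * p * u)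
      = star u * (p * (u * star u) * p) * u by simp only [mul_assoc],
      hu, mul_one, hp.isIdempotentElem.eq, mul_assoc]
  isSelfAdjoint := hp.isSelfAdjoint.conjugate' u

namespace Matrix

theorem star_eq_transpose_of_trivial {m α : Type*} [Star α] [TrivialStar α]
    (M : Matrix m m α) : star M = Mᵀ := by
  rw [star_eq_conjTranspose, conjTranspose_eq_transpose_of_trivial]

variable {m k R : Type*} [Fintype m] [Fintype k] [DecidableEq k] [CommRing R] [StarRing R]

theorem isStarProjection_mul_inv_conjTranspose_mul_self_mul_conjTranspose {A : Matrix m k R}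
    (hA : IsUnit (Aᴴ * A)) : IsStarProjection (A * ((Aᴴ * A)⁻¹ * Aᴴ)) where
  isIdempotentElem := by
    have hinv : (Aᴴ * A)⁻¹ * (Aᴴ * A) = 1 := nonsing_inv_mul _ ((isUnit_iff_isUnit_det _).1 hA)
    rw [IsIdempotentElem, show A * ((Aᴴ * A)⁻¹ * Aᴴ) * (A * ((Aᴴ * A)⁻¹ * Aᴴ))
      = A * ((Aᴴ * A)⁻¹ * (Aᴴ * A)) * ((Aᴴ * A)⁻¹ * Aᴴ) by simp only [Matrix.mul_assoc],
      hinv, Matrix.mul_one]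
  isSelfAdjoint := by
    rw [IsSelfAdjoint, star_eq_conjTranspose, conjTranspose_mul, conjTranspose_mul,
      conjTranspose_nonsing_inv, conjTranspose_mul, conjTranspose_conjTranspose, Matrix.mul_assoc]

end Matrix

theorem Jmat_mul_transpose (n : ℕ) : Jmat n * (Jmat n)ᵀ = 1 := by
  simp [Jmat, fromBlocks_transpose, fromBlocks_multiply, ← fromBlocks_one]

theorem IsSkewHamiltonian.Jmat_conj_transpose_mul {n : ℕ}
    {H : Matrix (Fin n ⊕ Fin n) (Fin n ⊕ Fin n) ℝ} (hH : IsSkewHamiltonian H)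
    (P : Matrix (Fin n ⊕ Fin n) (Fin n ⊕ Fin n) ℝ) :
    (Jmat n)ᵀ * (H * P)ᵀ * Jmat n = (Jmat n)ᵀ * Pᵀ * Jmat n * H := by
  calc (Jmat n)ᵀ * (H * P)ᵀ * Jmat n
      = (Jmat n)ᵀ * Pᵀ * (Jmat n * (Jmat n)ᵀ) * Hᵀ * Jmat n := by
        rw [Jmat_mul_transpose, transpose_mul]; simp only [Matrix.mul_one, Matrix.mul_assoc]
    _ = (Jmat n)ᵀ * Pᵀ * Jmat n * ((Jmat n)ᵀ * Hᵀ * Jmat n) := by simp only [Matrix.mul_assoc]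
    _ = (Jmat n)ᵀ * Pᵀ * Jmat n * H := by rw [hH]

section Krylov

variable {n : ℕ} {x : Fin n → (Fin n ⊕ Fin n) → ℝ}

theorem isUnit_XL_transpose_mul_XL (hLI : LinearIndependent ℝ x) :
    IsUnit ((XL x)ᵀ * XL x) := by
  have hcols : LinearIndependent ℝ (XL x).col :=
    hLI.comp _ (Fin.castLE_injective (Nat.sub_le n 1))
  simpa only [conjTranspose_eq_transpose_of_trivial] using
    (PosDef.conjTranspose_mul_self _ (mulVec_injective_iff.2 hcols)).isUnit

theorem isStarProjection_XL_mul_XLpinv (hLI : LinearIndependent ℝ x) :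
    IsStarProjection (XL x * XLpinv x) := by
  have h := isStarProjection_mul_inv_conjTranspose_mul_self_mul_conjTranspose (A := XL x)
    (by rw [conjTranspose_eq_transpose_of_trivial]; exact isUnit_XL_transpose_mul_XL hLI)
  rwa [conjTranspose_eq_transpose_of_trivial] at h

theorem KrylovRel.mul_XL {H : Matrix (Fin n ⊕ Fin n) (Fin n ⊕ Fin n) ℝ} (hK : KrylovRel H x) :
    H * XL x = XR x := by
  ext i j
  exact congr_fun (hK j) i

theorem XLpinv_mul_Jmat_mul_XR (hLag : ∀ i j : Fin n, x i ⬝ᵥ (Jmat n *ᵥ x j) = 0) :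
    XLpinv x * Jmat n * XR x = 0 := by
  have hLagMat : (XL x)ᵀ * (Jmat n * XR x) = 0 := by
    ext j l
    exact hLag _ _
  rw [XLpinv, Matrix.mul_assoc, Matrix.mul_assoc, hLagMat, Matrix.mul_zero]

end Krylov

/-- `Ĥ` has minimal spectral norm among all skew-Hamiltonian matrices realizing the
Krylov relations `H x_k = x_{k+1}`. -/
theorem Hhat_min_specNorm {n : ℕ} (x : Fin n → (Fin n ⊕ Fin n) → ℝ)
    (hLI : LinearIndependent ℝ x)
    (hLag : ∀ i j : Fin n, x i ⬝ᵥ (Jmat n *ᵥ x j) = 0)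
    (H : Matrix (Fin n ⊕ Fin n) (Fin n ⊕ Fin n) ℝ)
    (hH : IsSkewHamiltonian H) (hK : KrylovRel H x) :
    specNorm (Hhat x) ≤ specNorm H := by
  set P := XL x * XLpinv x
  set Q := (Jmat n)ᵀ * P * Jmat n
  have hP : IsStarProjection P := isStarProjection_XL_mul_XLpinv hLI
  have hQ : IsStarProjection Q := by
    have h := hP.conjugate' (u := Jmat n)
      (by rw [star_eq_transpose_of_trivial]; exact Jmat_mul_transpose n)
    rwa [star_eq_transpose_of_trivial] at h
  have hHP : H * P = XR x * XLpinv x := by rw [← Matrix.mul_assoc, hK.mul_XL]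
  have hQHP : Q * H * P = 0 := by
    calc Q * H * P = (Jmat n)ᵀ * XL x * (XLpinv x * Jmat n * XR x) * XLpinv x := by
          rw [Matrix.mul_assoc Q, hHP]; simp only [Q, P, Matrix.mul_assoc]
      _ = 0 := by rw [XLpinv_mul_Jmat_mul_XR hLag, Matrix.mul_zero, Matrix.zero_mul]
  have hHhat : Hhat x = H * P + Q * H := by
    rw [Hhat, ← hHP, hH.Jmat_conj_transpose_mul, ← star_eq_transpose_of_trivial P,
      hP.isSelfAdjoint.star_eq]
  rw [hHhat]
  exact specNorm_mul_add_mul_le_of_isStarProjection hP hQ hQHP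
end
end
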